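/- arXiv:0907.1506 — 2 statements merged into one kernel-verified Lean document; each statement's English description precedes it below -/
import Mathlib

section
/- Let n be a natural number and let P be a nonzero polynomial in two variables with real coefficients of total degree at most n. Let a be a positive integer, let ε be a positive real number, and let r be a positive real number. Assume there exists a natural number M such that P(p, q) = 0 for all integers p, q with p ≥ M, q ≥ M and 0 < a·q − r·p < ε. Then r is a rational number, and when r is written in lowest terms as r = u/v with u, v positive coprime integers, the denominator satisfies v ≤ a(n+1)/ε. -/
/-!
Write `F(p, q) = a q - r p`. If some lattice point has `0 < F < ε / (n + 1)`, there is such a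
point `d` in `ℕ²`. For every large `N` we have `F(N, M) ≤ 0`, so stepping from `(N, M)` along `d`
enters the strip `0 < F < ε` and stays in it for `n + 1` consecutive steps. Hence `P`, restricted
to the line through `(N, M)` in direction `d`, has degree `≤ n` and `n + 1` zeros, and vanishes.
These are infinitely many parallel lines, so `P = 0`.

Such a lattice point exists when `r / a` is irrational, since `ℤ a + ℤ r` is then dense in `ℝ`,
and when `r = u / v` in lowest terms with `a / v < ε / (n + 1)`, since by Bézout `F = a / v` is
attained.
-/

open Polynomial

namespace MvPolynomial
variable {R σ : Type*} [CommRing R]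

noncomputable def restrictToLine (P : MvPolynomial σ R) (z d : σ → R) : R[X] :=
  aeval (fun i => Polynomial.C (d i) * Polynomial.X + Polynomial.C (z i)) P

theorem eval_restrictToLine (P : MvPolynomial σ R) (z d : σ → R) (t : R) :
    (P.restrictToLine z d).eval t = eval (z + t • d) P := by
  rw [restrictToLine, ← Polynomial.coe_aeval_eq_eval, ← AlgHom.comp_apply, comp_aeval]
  have hpt : (fun i => Polynomial.aeval t (Polynomial.C (d i) * Polynomial.X + Polynomial.C (z i)))
      = z + t • d := by
    funext i
    simp only [map_add, map_mul, Polynomial.aeval_C, Polynomial.aeval_X, Pi.add_apply,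
      Pi.smul_apply, smul_eq_mul, Algebra.algebraMap_self, RingHom.id_apply]
    ring
  rw [hpt]
  rfl

theorem natDegree_aeval_le_totalDegree (P : MvPolynomial σ R) {v : σ → R[X]}
    (hv : ∀ i, (v i).natDegree ≤ 1) : (aeval v P).natDegree ≤ P.totalDegree := by
  conv_lhs => rw [P.as_sum, map_sum]
  refine natDegree_sum_le_of_forall_le _ _ fun e he => ?_
  rw [aeval_monomial, Polynomial.algebraMap_apply]
  refine natDegree_C_mul_le _ _ |>.trans <| natDegree_prod_le _ _ |>.trans ?_
  refine le_trans ?_ (le_totalDegree he)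
  refine Finset.sum_le_sum fun i _ => natDegree_pow_le.trans ?_
  simpa using Nat.mul_le_mul_left (e i) (hv i)

theorem natDegree_restrictToLine_le (P : MvPolynomial σ R) (z d : σ → R) :
    (P.restrictToLine z d).natDegree ≤ P.totalDegree :=
  P.natDegree_aeval_le_totalDegree fun _ => natDegree_linear_le

theorem eval_add_smul_eq_zero_of_forall_nat_le [IsDomain R] [CharZero R] {P : MvPolynomial σ R}
    {n : ℕ} (hdeg : P.totalDegree ≤ n) {z d : σ → R}
    (h : ∀ m ≤ n, eval (z + (m : R) • d) P = 0) (t : R) : eval (z + t • d) P = 0 := by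
  classical
  suffices P.restrictToLine z d = 0 by rw [← eval_restrictToLine, this, Polynomial.eval_zero]
  refine eq_zero_of_natDegree_lt_card_of_eval_eq_zero' _ ((Finset.range (n + 1)).image (↑))
    (fun x hx => ?_) ?_
  · obtain ⟨m, hm, rfl⟩ := Finset.mem_image.mp hx
    rw [eval_restrictToLine]
    exact h m (Nat.lt_succ_iff.mp (Finset.mem_range.mp hm))
  · rw [Finset.card_image_of_injective _ Nat.cast_injective, Finset.card_range]
    exact Nat.lt_succ_of_le ((natDegree_restrictToLine_le P z d).trans hdeg)

theorem eq_zero_of_eval_eq_zero_on_parallel_lines {K : Type*} [Field K]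
    {P : MvPolynomial (Fin 2) K} {S : Set K} (hS : S.Infinite) (y : K) {d : Fin 2 → K}
    (hd : d 1 ≠ 0)
    (h : ∀ x ∈ S, ∀ t : K, eval (![x, y] + t • d) P = 0) : P = 0 := by
  have : Infinite K := Set.infinite_univ_iff.mp (hS.mono (Set.subset_univ S))
  refine MvPolynomial.funext fun w => ?_
  set c := (w 1 - y) / d 1
  have hroots : (· + c * d 0) '' S ⊆ {x | (P.restrictToLine ![0, w 1] ![1, 0]).IsRoot x} := by
    rintro _ ⟨x, hx, rfl⟩
    have hpt : ![0, w 1] + (x + c * d 0) • ![1, 0] = ![x, y] + c • d := by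
      funext i
      fin_cases i
      · simp
      · simp [c]
        field_simp
        ring
    change (P.restrictToLine _ _).eval _ = 0
    rw [eval_restrictToLine, hpt, h x hx]
  have hzero := eq_zero_of_infinite_isRoot _ ((hS.image (add_left_injective _).injOn).mono hroots)
  have hw : ![0, w 1] + w 0 • ![1, 0] = w := by
    funext i
    fin_cases i <;> simp
  rw [← hw, ← eval_restrictToLine, hzero, Polynomial.eval_zero, map_zero]

end MvPolynomial

theorem exists_nonneg_mul_sub_mem_Ioc {a r : ℝ} (ha : 0 < a) (hr : 0 < r) {p₁ q₁ : ℤ}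
    (h : 0 < a * q₁ - r * p₁) :
    ∃ p q : ℤ, 0 ≤ p ∧ 0 ≤ q ∧ 0 < a * q - r * p ∧ a * q - r * p ≤ a * q₁ - r * p₁ := by
  rcases le_or_gt 0 p₁ with hp | hp
  · have hq : (0 : ℝ) ≤ q₁ := by
      have : (0 : ℝ) ≤ p₁ := by exact_mod_cast hp
      nlinarith
    exact ⟨p₁, q₁, hp, by exact_mod_cast hq, h, le_rfl⟩
  set e := a * q₁ - r * p₁
  -- walk from `(0, 1)` along `-(p₁, q₁)`; if `q₁ > 0` then `e > a` and no step is taken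
  obtain ⟨m, hm, -⟩ := existsUnique_sub_zsmul_mem_Ioc h a 0
  rw [zero_add, zsmul_eq_mul, Set.mem_Ioc] at hm
  have hp' : (p₁ : ℝ) < 0 := by exact_mod_cast hp
  have hm0 : 0 ≤ m := by
    have : (-1 : ℝ) < m := by by_contra!; nlinarith
    have : (-1 : ℤ) < m := by exact_mod_cast this
    omega
  have hmq : m * q₁ ≤ 0 := by
    rcases le_or_gt q₁ 0 with hq | hq
    · exact mul_nonpos_of_nonneg_of_nonpos hm0 hq
    · have hq' : (1 : ℝ) ≤ q₁ := by exact_mod_cast hq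
      have : (m : ℝ) < 1 := by by_contra!; nlinarith
      have : m < 1 := by exact_mod_cast this
      simp [show m = 0 by omega]
  have hF : a * ((1 - m * q₁ : ℤ) : ℝ) - r * ((-m * p₁ : ℤ) : ℝ) = a - m * e := by
    push_cast; ring
  refine ⟨-m * p₁, 1 - m * q₁, by nlinarith, by omega, ?_, ?_⟩ <;> rw [hF]
  exacts [hm.1, hm.2]

open MvPolynomial in
theorem eq_zero_of_eval_eq_zero_on_strip {n : ℕ} {P : MvPolynomial (Fin 2) ℝ}
    (hdeg : P.totalDegree ≤ n) {a r ε : ℝ} (ha : 0 < a) (hr : 0 < r) {M : ℤ}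
    (hvan : ∀ p q : ℤ, M ≤ p → M ≤ q → 0 < a * q - r * p → a * q - r * p < ε →
      eval ![(p : ℝ), (q : ℝ)] P = 0)
    {p₀ q₀ : ℤ} (h₀ : 0 < a * q₀ - r * p₀) (hε : (n + 1) * (a * q₀ - r * p₀) < ε) :
    P = 0 := by
  obtain ⟨p₁, q₁, hp₁, hq₁, he, heh⟩ := exists_nonneg_mul_sub_mem_Ioc ha hr h₀
  set e := a * q₁ - r * p₁
  have hq₁_ne : (q₁ : ℝ) ≠ 0 := by
    intro hq
    have : (0 : ℝ) ≤ p₁ := by exact_mod_cast hp₁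
    nlinarith
  set N₀ : ℤ := max M ⌈a * M / r⌉
  refine eq_zero_of_eval_eq_zero_on_parallel_lines
    ((Set.Ici_infinite N₀).image Int.cast_injective.injOn) (M : ℝ) (d := ![(p₁ : ℝ), q₁]) hq₁_ne ?_
  rintro _ ⟨N, hN, rfl⟩
  have hNM : M ≤ N := le_of_max_le_left hN
  have hstart : a * M - r * N ≤ 0 := by
    have : a * M / r ≤ N := (Int.le_ceil _).trans (by exact_mod_cast le_of_max_le_right hN)
    rw [div_le_iff₀ hr] at this
    linarith
  obtain ⟨k, hk, -⟩ := existsUnique_sub_zsmul_mem_Ioc he (a * M - r * N) 0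
  rw [zero_add, zsmul_eq_mul, Set.mem_Ioc] at hk
  have hk0 : 0 ≤ -k := by
    have : (k : ℝ) < 0 := by by_contra!; nlinarith
    have : k < 0 := by exact_mod_cast this
    omega
  set d : Fin 2 → ℝ := ![(p₁ : ℝ), q₁]
  have hline : ∀ m ≤ n, eval (![(N : ℝ), M] + (-k : ℝ) • d + (m : ℝ) • d) P = 0 := by
    intro m hm
    have hpt : ![(N : ℝ), M] + (-k : ℝ) • d + (m : ℝ) • d
        = ![((N + (-k + m) * p₁ : ℤ) : ℝ), ((M + (-k + m) * q₁ : ℤ) : ℝ)] := by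
      funext i
      fin_cases i <;> simp [d] <;> ring
    have hF : a * ((M + (-k + m) * q₁ : ℤ) : ℝ) - r * ((N + (-k + m) * p₁ : ℤ) : ℝ)
        = (a * M - r * N - k * e) + m * e := by
      push_cast; ring
    have hme : (m : ℝ) * e ≤ n * e := by gcongr
    rw [hpt]
    refine hvan _ _ ?_ ?_ ?_ ?_
    · nlinarith [mul_nonneg (by omega : (0 : ℤ) ≤ -k + m) hp₁]
    · nlinarith [mul_nonneg (by omega : (0 : ℤ) ≤ -k + m) hq₁]
    · rw [hF]; nlinarith
    · rw [hF]; nlinarith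
  intro t
  have := eval_add_smul_eq_zero_of_forall_nat_le hdeg hline (t + k)
  rwa [add_assoc, ← add_smul, neg_add_cancel_comm_assoc] at this

theorem exists_mul_sub_mem_Ioo_of_irrational {a r : ℝ} (h : Irrational (a / r)) {η : ℝ}
    (hη : 0 < η) : ∃ p q : ℤ, 0 < a * q - r * p ∧ a * q - r * p < η := by
  obtain ⟨x, hx, hxη⟩ := (dense_addSubgroupClosure_pair_iff.mpr h).exists_between hη
  obtain ⟨m, k, rfl⟩ := AddSubgroup.mem_closure_pair.mp hx
  refine ⟨-k, m, ?_⟩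
  simpa [zsmul_eq_mul, mul_comm] using hxη

theorem exists_mul_sub_eq_div_of_isCoprime (a : ℤ) {u v : ℤ} (h : IsCoprime u v) (hv : v ≠ 0) :
    ∃ p q : ℤ, (a : ℝ) * q - (u / v : ℝ) * p = a / v := by
  obtain ⟨x, y, hxy⟩ := h
  refine ⟨-a * x, y, ?_⟩
  have hxy' : (x : ℝ) * u + y * v = 1 := by exact_mod_cast hxy
  have hv' : (v : ℝ) ≠ 0 := by exact_mod_cast hv
  field_simp
  push_cast
  linear_combination (a : ℝ) * hxy'

/-- Kollár–Mori Lemma 3.19, as used in the rationality theorem for quasi-log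
pairs: if a nonzero real polynomial `P` in two variables of total degree at
most `n` vanishes at all sufficiently large integral points `(p, q)` with
`0 < a*q - r*p < ε`, then `r` is rational and, in lowest terms `r = u/v`,
its denominator satisfies `v ≤ a*(n+1)/ε`. -/
theorem stmt_0 (n : ℕ) (P : MvPolynomial (Fin 2) ℝ) (hP : P ≠ 0)
    (hdeg : P.totalDegree ≤ n) (a : ℕ) (ha : 0 < a)
    (ε : ℝ) (hε : 0 < ε) (r : ℝ) (hr : 0 < r)
    (hvan : ∃ M : ℕ, ∀ p q : ℤ, (M : ℤ) ≤ p → (M : ℤ) ≤ q →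
      0 < (a : ℝ) * q - r * p → (a : ℝ) * q - r * p < ε →
      MvPolynomial.eval ![(p : ℝ), (q : ℝ)] P = 0) :
    ∃ u v : ℕ, 0 < u ∧ 0 < v ∧ Nat.Coprime u v ∧ r = (u : ℝ) / v ∧
      (v : ℝ) ≤ (a : ℝ) * (n + 1) / ε := by
  obtain ⟨M, hM⟩ := hvan
  have hn : (0 : ℝ) < n + 1 := by positivity
  have no_small_value :
      ∀ p q : ℤ, 0 < (a : ℝ) * q - r * p → (a : ℝ) * q - r * p < ε / (n + 1) → False :=
    fun p q h₀ hδ => hP (eq_zero_of_eval_eq_zero_on_strip hdeg (by positivity) hr hM h₀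
      (by rwa [lt_div_iff₀ hn, mul_comm] at hδ))
  have hrat : ¬ Irrational r := fun hirr => by
    obtain ⟨p, q, h₀, hδ⟩ := exists_mul_sub_mem_Ioo_of_irrational (hirr.natCast_div ha.ne')
      (η := ε / (n + 1)) (by positivity)
    exact no_small_value p q h₀ hδ
  obtain ⟨s, rfl⟩ := not_not.mp hrat
  lift s to ℚ≥0 using (by exact_mod_cast hr.le)
  have hs : ((s : ℚ) : ℝ) = s.num / s.den := by rw [← NNRat.cast_def]; rfl
  refine ⟨s.num, s.den, NNRat.num_pos.mpr (by exact_mod_cast hr), s.den_pos,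
    s.coprime_num_den, hs, ?_⟩
  rw [le_div_iff₀ hε]
  by_contra! hbig
  obtain ⟨p, q, hpq⟩ := exists_mul_sub_eq_div_of_isCoprime a
    (Nat.isCoprime_iff_coprime.mpr s.coprime_num_den) (by exact_mod_cast s.den_pos.ne')
  push_cast at hpq
  refine no_small_value p q ?_ ?_ <;> rw [hs, hpq]
  · positivity
  · rw [div_lt_div_iff₀ (by exact_mod_cast s.den_pos) hn]
    linarith
end

section
/- Let n be a positive integer and let W ⊆ ℝ^n be a closed convex cone. Let U ⊆ ℝ^n be a linear subspace spanned (over ℝ) by a set of vectors with rational coordinates. If there exists u ∈ U such that ⟨u, z⟩ > 0 for every z ∈ W with z ≠ 0, then there exists u' ∈ U all of whose coordinates are rational such that ⟨u', z⟩ > 0 for every z ∈ W with z ≠ 0. -/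
/-!
Positivity on the nonzero points of a closed cone `W` is an open condition on `u`: by compactness of
`W ∩ sphere 0 1` a positive functional satisfies `ε ‖z‖ ≤ ⟪u, z⟫` on `W` for some `ε > 0`, and this
margin survives perturbations of `u` of size less than `ε`. The ℚ-span of `s` is dense in its ℝ-span
and consists of vectors with rational coordinates, so it meets this open set around `u`.
-/

open scoped RealInnerProductSpace

theorem Submodule.span_real_subset_closure_span_rat {E : Type*} [AddCommGroup E] [Module ℝ E]
    [Module ℚ E] [TopologicalSpace E] [ContinuousAdd E] [ContinuousSMul ℝ E] (s : Set E) :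
    (span ℝ s : Set E) ⊆ closure (span ℚ s) := by
  let A := span ℚ s
  let B : Submodule ℝ E :=
    { A.toAddSubmonoid.topologicalClosure with
      smul_mem' := fun c x hx =>
        map_mem_closure₂ continuous_smul (Rat.denseRange_cast c) hx fun _ ⟨q, hq⟩ y hy => by
          rw [← hq, Rat.cast_smul_eq_qsmul]
          exact A.smul_mem q hy }
  exact span_le (p := B) |>.mpr (subset_span.trans subset_closure)

def EuclideanSpace.rationalPoints (ι : Type*) : Submodule ℚ (EuclideanSpace ℝ ι) where
  carrier := {v | ∀ i, ∃ q : ℚ, v i = q}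
  zero_mem' _ := ⟨0, by simp⟩
  add_mem' hv hw i := by
    obtain ⟨q, hq⟩ := hv i
    obtain ⟨r, hr⟩ := hw i
    exact ⟨q + r, by simp [hq, hr]⟩
  smul_mem' c v hv i := by
    obtain ⟨q, hq⟩ := hv i
    exact ⟨c * q, by simp [← Rat.cast_smul_eq_qsmul ℝ, hq]⟩

section PositiveOnCone

variable {E : Type*} [NormedAddCommGroup E] [InnerProductSpace ℝ E] [ProperSpace E]

theorem ConvexCone.exists_pos_mul_norm_le_inner (W : ConvexCone ℝ E) (hW : IsClosed (W : Set E))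
    {u : E} (hpos : ∀ z ∈ W, z ≠ 0 → 0 < ⟪u, z⟫) :
    ∃ ε > 0, ∀ z ∈ W, ε * ‖z‖ ≤ ⟪u, z⟫ := by
  have hK : IsCompact ((W : Set E) ∩ Metric.sphere 0 1) := (isCompact_sphere 0 1).inter_left hW
  obtain ⟨ε, hε, hmin⟩ := hK.exists_forall_le' (continuous_const.inner continuous_id).continuousOn
    fun z hz => hpos z hz.1 (ne_zero_of_mem_unit_sphere ⟨z, hz.2⟩)
  refine ⟨ε, hε, fun z hz => ?_⟩
  rcases eq_or_ne z 0 with rfl | hz0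
  · simp
  have hnorm : 0 < ‖z‖ := norm_pos_iff.mpr hz0
  have hunit : ‖z‖⁻¹ • z ∈ (W : Set E) ∩ Metric.sphere 0 1 :=
    ⟨W.smul_mem (inv_pos.mpr hnorm) hz, by simp [norm_smul, hnorm.ne']⟩
  have hunit_le : ε ≤ ⟪u, ‖z‖⁻¹ • z⟫ := hmin _ hunit
  rwa [real_inner_smul_right, inv_mul_eq_div, le_div_iff₀ hnorm] at hunit_le

theorem ConvexCone.isOpen_setOf_inner_pos (W : ConvexCone ℝ E) (hW : IsClosed (W : Set E)) :
    IsOpen {u : E | ∀ z ∈ W, z ≠ 0 → 0 < ⟪u, z⟫} := by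
  refine Metric.isOpen_iff.mpr fun u hpos => ?_
  obtain ⟨ε, hε, hmargin⟩ := W.exists_pos_mul_norm_le_inner hW hpos
  refine ⟨ε, hε, fun v hv z hz hz0 => ?_⟩
  have hnorm : 0 < ‖z‖ := norm_pos_iff.mpr hz0
  have hclose : ‖v - u‖ < ε := by rwa [← dist_eq_norm]
  calc 0 < ε * ‖z‖ - ‖v - u‖ * ‖z‖ := by nlinarith
    _ ≤ ⟪u, z⟫ + ⟪v - u, z⟫ := by
        linarith [hmargin z hz, neg_le_of_abs_le (abs_real_inner_le_norm (v - u) z)]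
    _ = ⟪v, z⟫ := by rw [inner_sub_left]; ring

end PositiveOnCone

theorem stmt_4_general (n : ℕ)
    (W : ConvexCone ℝ (EuclideanSpace ℝ (Fin n)))
    (hW : IsClosed (W : Set (EuclideanSpace ℝ (Fin n))))
    (U : Submodule ℝ (EuclideanSpace ℝ (Fin n)))
    (s : Set (EuclideanSpace ℝ (Fin n)))
    (hs : ∀ v ∈ s, ∀ i : Fin n, ∃ q : ℚ, v i = (q : ℝ))
    (hU : U = Submodule.span ℝ s)
    (u : EuclideanSpace ℝ (Fin n)) (hu : u ∈ U)
    (hpos : ∀ z ∈ W, z ≠ 0 → 0 < ⟪u, z⟫) :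
    ∃ u' ∈ U, (∀ i : Fin n, ∃ q : ℚ, u' i = (q : ℝ)) ∧
      ∀ z ∈ W, z ≠ 0 → 0 < ⟪u', z⟫ := by
  subst hU
  obtain ⟨u', hpos', hu'⟩ := mem_closure_iff.mp (Submodule.span_real_subset_closure_span_rat s hu)
    _ (W.isOpen_setOf_inner_pos hW) hpos
  have hrat : Submodule.span ℚ s ≤ EuclideanSpace.rationalPoints (Fin n) := Submodule.span_le.mpr hs
  exact ⟨u', Submodule.span_le_restrictScalars ℚ ℝ s hu', hrat hu', hpos'⟩

/-- Let `W ⊆ ℝ^n` (with `n > 0`) be a closed convex cone and let `U` be a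
linear subspace of `ℝ^n` spanned by vectors with rational coordinates.  If
some `u ∈ U` satisfies `⟪u, z⟫ > 0` for all nonzero `z ∈ W`, then there is a
`u' ∈ U` with rational coordinates satisfying `⟪u', z⟫ > 0` for all nonzero
`z ∈ W`. -/
theorem stmt_4 (n : ℕ) (hn : 0 < n)
    (W : ConvexCone ℝ (EuclideanSpace ℝ (Fin n)))
    (hW : IsClosed (W : Set (EuclideanSpace ℝ (Fin n))))
    (U : Submodule ℝ (EuclideanSpace ℝ (Fin n)))
    (s : Set (EuclideanSpace ℝ (Fin n)))
    (hs : ∀ v ∈ s, ∀ i : Fin n, ∃ q : ℚ, v i = (q : ℝ))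
    (hU : U = Submodule.span ℝ s)
    (u : EuclideanSpace ℝ (Fin n)) (hu : u ∈ U)
    (hpos : ∀ z ∈ W, z ≠ 0 → 0 < ⟪u, z⟫) :
    ∃ u' ∈ U, (∀ i : Fin n, ∃ q : ℚ, u' i = (q : ℝ)) ∧
      ∀ z ∈ W, z ≠ 0 → 0 < ⟪u', z⟫ :=
  stmt_4_general n W hW U s hs hU u hu hpos
end
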